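/- Let γ : ℝ → ℝ² be a smooth closed unit-speed curve with period ℓ that is injective on [0, ℓ), and define F(x₀, t₀) = (4πt₀)^{−1/2} ∫₀^ℓ e^{−|γ(t)−x₀|²/(4t₀)} dt and λ(γ) = sup over x₀ ∈ ℝ², t₀ > 0 of F(x₀,t₀). If λ(γ) > 1, then there exist x₀ ∈ ℝ² and t₀ > 0 with F(x₀, t₀) = λ(γ). -/

import Mathlib

/-!
As `t₀ → 0`, `F_{x₀,t₀}` is at most `1 + o(1)` uniformly in `x₀`. Near a point `γ t₁` closest to
`x₀` the curve is almost its tangent line, which is orthogonal to `γ t₁ - x₀`, so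
`|γ t - x₀|² ≥ a (t - t₁)²` with `a` close to `1`; away from `t₁`, embeddedness keeps `γ t` a fixed
distance from `γ t₁`, hence from `x₀`. Comparing with a Gaussian integral gives
`F ≤ a^{-1/2} + o(1)`. As `t₀ → ∞`, `F ≤ ℓ / √(4πt₀) → 0`, and for `t₀` in a compact range `F`
decays as `|x₀| → ∞`. Since `λ(γ) > 1`, the supremum is therefore a supremum over a compact set
of parameters, on which `F` is continuous.
-/

noncomputable section
open Real MeasureTheory
open scoped RealInnerProductSpace

abbrev E2 := EuclideanSpace ℝ (Fin 2)

/-- The Gaussian weighted length functional `F_{x₀,t₀}` of a closed curve of period `ℓ`. -/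
def Fcur (γ : ℝ → E2) (ℓ : ℝ) (x₀ : E2) (t₀ : ℝ) : ℝ :=
  (4 * π * t₀) ^ (-(1:ℝ)/2) * ∫ t in (0:ℝ)..ℓ, Real.exp (-‖γ t - x₀‖ ^ 2 / (4 * t₀))

/-- The entropy `λ(γ) = sup_{x₀,t₀} F_{x₀,t₀}(γ)` of a closed curve of period `ℓ`. -/
def entCur (γ : ℝ → E2) (ℓ : ℝ) : ℝ :=
  sSup {a : ℝ | ∃ x₀ : E2, ∃ t₀ : ℝ, 0 < t₀ ∧ a = Fcur γ ℓ x₀ t₀}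

open Filter Topology Set Function

section Taylor

variable {E : Type*} [NormedAddCommGroup E] [NormedSpace ℝ E] {f : ℝ → E} {κ : ℝ}

theorem norm_sub_sub_smul_deriv_le (hf : Differentiable ℝ f) (hf' : Differentiable ℝ (deriv f))
    (hκ : ∀ u, ‖deriv (deriv f) u‖ ≤ κ) (s t : ℝ) :
    ‖f t - f s - (t - s) • deriv f s‖ ≤ κ * (t - s) ^ 2 := by
  have hlip (u : ℝ) : ‖deriv f u - deriv f s‖ ≤ κ * |u - s| := by
    simpa [Real.norm_eq_abs] using convex_univ.norm_image_sub_le_of_norm_deriv_le (fun x _ => hf' x)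
      (fun x _ => hκ x) (mem_univ s) (mem_univ u)
  have hg (u : ℝ) :
      HasDerivAt (fun u => f u - (u - s) • deriv f s) (deriv f u - deriv f s) u :=
    ((hf u).hasDerivAt.sub (((hasDerivAt_id u).sub_const s).smul_const _)).congr_deriv (by simp)
  have := (convex_uIcc s t).norm_image_sub_le_of_norm_hasDerivWithin_le
    (fun u _ => (hg u).hasDerivWithinAt)
    (fun u hu => (hlip u).trans (mul_le_mul_of_nonneg_left (abs_sub_left_of_mem_uIcc hu)
      ((norm_nonneg _).trans (hκ s))))
    left_mem_uIcc right_mem_uIcc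
  rwa [sub_self, zero_smul, sub_zero, sub_right_comm, Real.norm_eq_abs, mul_assoc, ← sq,
    sq_abs] at this

end Taylor

section Foot

variable {E : Type*} [NormedAddCommGroup E] [InnerProductSpace ℝ E] {γ : ℝ → E} {x : E} {t₁ : ℝ}

theorem inner_deriv_sub_eq_zero_of_forall_norm_sub_le (hγ : DifferentiableAt ℝ γ t₁)
    (hmin : ∀ t, ‖γ t₁ - x‖ ≤ ‖γ t - x‖) : ⟪deriv γ t₁, γ t₁ - x⟫ = 0 := by
  have hloc : IsLocalMin (fun t => ‖γ t - x‖ ^ 2) t₁ :=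
    Eventually.of_forall fun t => pow_le_pow_left₀ (norm_nonneg _) (hmin t) 2
  have := hloc.hasDerivAt_eq_zero (hγ.hasDerivAt.sub_const x).norm_sq
  rw [real_inner_comm]
  linarith

theorem mul_sq_sub_le_norm_sub_sq {κ a : ℝ} (hγ : Differentiable ℝ γ)
    (hγ' : Differentiable ℝ (deriv γ)) (hκ : ∀ u, ‖deriv (deriv γ) u‖ ≤ κ) (hκ₀ : 0 < κ)
    (hunit : ‖deriv γ t₁‖ = 1) (hortho : ⟪deriv γ t₁, γ t₁ - x⟫ = 0)
    (hx : ‖γ t₁ - x‖ ≤ (1 - a) / (4 * κ)) {t : ℝ} (ht : |t - t₁| ≤ (1 - a) / (4 * κ)) :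
    a * (t - t₁) ^ 2 ≤ ‖γ t - x‖ ^ 2 := by
  set v := γ t₁ - x
  set s := t - t₁
  set R := γ t - γ t₁ - s • deriv γ t₁
  have hR : ‖R‖ ≤ κ * s ^ 2 := norm_sub_sub_smul_deriv_le hγ hγ' hκ t₁ t
  have hpyth : ‖v + s • deriv γ t₁‖ ^ 2 = ‖v‖ ^ 2 + s ^ 2 := by
    rw [norm_add_sq_real, real_inner_smul_right, real_inner_comm, hortho, norm_smul, hunit,
      Real.norm_eq_abs, mul_one, mul_zero, mul_zero, add_zero, sq_abs]
  have hlin : ‖v + s • deriv γ t₁‖ ≤ ‖v‖ + |s| := by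
    simpa [norm_smul, hunit] using norm_add_le v (s • deriv γ t₁)
  have hcross : -((‖v‖ + |s|) * (κ * s ^ 2)) ≤ ⟪v + s • deriv γ t₁, R⟫ := by
    have := (abs_real_inner_le_norm (v + s • deriv γ t₁) R).trans
      (mul_le_mul hlin hR (norm_nonneg _) (by positivity))
    linarith [neg_abs_le ⟪v + s • deriv γ t₁, R⟫]
  have hsmall : 2 * (‖v‖ + |s|) * κ ≤ 1 - a := by
    have : ‖v‖ + |s| ≤ (1 - a) / (2 * κ) := by
      have : (1 - a) / (4 * κ) + (1 - a) / (4 * κ) = (1 - a) / (2 * κ) := by field_simp; ring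
      linarith
    calc 2 * (‖v‖ + |s|) * κ ≤ 2 * ((1 - a) / (2 * κ)) * κ := by gcongr
      _ = 1 - a := by field_simp
  have hdecomp : γ t - x = (v + s • deriv γ t₁) + R := by simp only [v, R]; abel
  rw [hdecomp, norm_add_sq_real, hpyth]
  nlinarith [mul_le_mul_of_nonneg_right hsmall (sq_nonneg s), sq_nonneg ‖v‖, sq_nonneg ‖R‖]

end Foot

namespace Function.Periodic

theorem deriv {E : Type*} [NormedAddCommGroup E] [NormedSpace ℝ E] {f : ℝ → E} {c : ℝ}
    (hp : Periodic f c) : Periodic (deriv f) c := fun x => by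
  rw [← deriv_comp_add_const, show (fun y => f (y + c)) = f from funext hp]

theorem exists_pos_norm_le {E : Type*} [SeminormedAddCommGroup E] {f : ℝ → E} {c : ℝ}
    (hp : Periodic f c) (hc : c ≠ 0) (hf : Continuous f) : ∃ C > 0, ∀ t, ‖f t‖ ≤ C := by
  obtain ⟨C, hC, h⟩ := (hp.isBounded_of_continuous hc hf).exists_pos_norm_le
  exact ⟨C, hC, fun t => h _ ⟨t, rfl⟩⟩

theorem exists_forall_le {α : Type*} [LinearOrder α] [TopologicalSpace α] [ClosedIicTopology α]
    {f : ℝ → α} {c : ℝ} (hp : Periodic f c) (hc : c ≠ 0) (hf : Continuous f) :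
    ∃ t₁, ∀ t, f t₁ ≤ f t := by
  obtain ⟨_, ⟨t₁, rfl⟩, h⟩ := (hp.compact_of_continuous hc hf).exists_isLeast (range_nonempty f)
  exact ⟨t₁, fun t => h ⟨t, rfl⟩⟩

variable {X : Type*} {γ : ℝ → X} {ℓ : ℝ}

theorem le_abs_sub_of_injOn (hp : Periodic γ ℓ) (hℓ : 0 < ℓ) (hinj : InjOn γ (Ico 0 ℓ))
    {u v : ℝ} (huv : γ u = γ v) (hne : u ≠ v) : ℓ ≤ |u - v| := by
  have hmod : toIcoMod hℓ 0 v = toIcoMod hℓ 0 u := by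
    refine hinj (by simpa using toIcoMod_mem_Ico hℓ 0 v) (by simpa using toIcoMod_mem_Ico hℓ 0 u) ?_
    rw [← self_sub_toIcoDiv_zsmul, ← self_sub_toIcoDiv_zsmul, hp.sub_zsmul_eq, hp.sub_zsmul_eq,
      huv]
  obtain ⟨n, hn⟩ := (toIcoMod_eq_toIcoMod hℓ).1 hmod
  have hn0 : n ≠ 0 := by
    rintro rfl
    exact hne (sub_eq_zero.1 (by simpa using hn))
  have : (1 : ℝ) ≤ |(n : ℝ)| := by exact_mod_cast Int.one_le_abs hn0
  rw [hn, zsmul_eq_mul, abs_mul, abs_of_pos hℓ]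
  nlinarith

theorem exists_pos_le_dist_add [MetricSpace X] (hp : Periodic γ ℓ) (hℓ : 0 < ℓ)
    (hinj : InjOn γ (Ico 0 ℓ)) (hγ : Continuous γ) {r : ℝ} (hr : 0 < r) :
    ∃ d > 0, ∀ t s, r ≤ |s| → |s| ≤ ℓ / 2 → d ≤ dist (γ (t + s)) (γ t) := by
  set K := Icc 0 ℓ ×ˢ {s : ℝ | r ≤ |s| ∧ |s| ≤ ℓ / 2}
  have hK : IsCompact K := isCompact_Icc.prod <|
    (isCompact_Icc (a := -(ℓ / 2)) (b := ℓ / 2)).of_isClosed_subset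
      ((isClosed_le continuous_const continuous_abs).inter
        (isClosed_le continuous_abs continuous_const))
      fun s hs => abs_le.1 hs.2
  have hpos : ∀ p ∈ K, 0 < dist (γ (p.1 + p.2)) (γ p.1) := by
    rintro ⟨t, s⟩ ⟨-, hs₁, hs₂⟩
    refine dist_pos.2 fun h => ?_
    have hs : s ≠ 0 := by rintro rfl; simp at hs₁; linarith
    have := hp.le_abs_sub_of_injOn hℓ hinj h (by simpa using hs)
    rw [add_sub_cancel_left] at this
    linarith
  obtain ⟨d, hd, hdK⟩ := hK.exists_forall_le' (by fun_prop) hpos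
  refine ⟨d, hd, fun t s h₁ h₂ => ?_⟩
  have := hdK (toIcoMod hℓ 0 t, s)
    ⟨Ico_subset_Icc_self (by simpa using toIcoMod_mem_Ico hℓ 0 t), h₁, h₂⟩
  rwa [← self_sub_toIcoDiv_zsmul, sub_add_eq_add_sub, hp.sub_zsmul_eq, hp.sub_zsmul_eq] at this

end Function.Periodic

section Curve

variable {E : Type*} [NormedAddCommGroup E] [InnerProductSpace ℝ E] {γ : ℝ → E} {ℓ : ℝ}

theorem exists_quadratic_lower_bound_norm_sub (hγ : ContDiff ℝ 2 γ)
    (hunit : ∀ t, ‖deriv γ t‖ = 1) (hp : Periodic γ ℓ) (hℓ : 0 < ℓ) (hinj : InjOn γ (Ico 0 ℓ))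
    {a : ℝ} (ha : a < 1) :
    ∃ c > 0, ∀ x : E, ∃ t₁, ∀ t, |t - t₁| ≤ ℓ / 2 →
      a * (t - t₁) ^ 2 ≤ ‖γ t - x‖ ^ 2 ∨ c ≤ ‖γ t - x‖ ^ 2 := by
  have hd : Differentiable ℝ γ := hγ.differentiable (by norm_num)
  have hγ' : ContDiff ℝ 1 (deriv γ) := (contDiff_succ_iff_deriv.1 hγ).2.2
  obtain ⟨κ, hκ₀, hκ⟩ :=
    hp.deriv.deriv.exists_pos_norm_le hℓ.ne' (hγ'.continuous_deriv le_rfl)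
  set ρ := (1 - a) / (4 * κ)
  have hρ : 0 < ρ := div_pos (by linarith) (by positivity)
  obtain ⟨d, hd₀, hsep⟩ := hp.exists_pos_le_dist_add hℓ hinj hγ.continuous hρ
  set m₀ := min ρ (d / 2)
  refine ⟨m₀ ^ 2, by positivity, fun x => ?_⟩
  obtain ⟨t₁, ht₁⟩ := (hp.comp fun y => ‖y - x‖).exists_forall_le hℓ.ne' (by fun_prop)
  refine ⟨t₁, fun t ht => ?_⟩
  by_cases hfar : m₀ ≤ ‖γ t₁ - x‖
  · exact Or.inr (pow_le_pow_left₀ (by positivity) (hfar.trans (ht₁ t)) 2)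
  rw [not_le] at hfar
  rcases le_or_gt |t - t₁| ρ with hnear | hnear
  · exact Or.inl <| mul_sq_sub_le_norm_sub_sq hd (hγ'.differentiable one_ne_zero) hκ hκ₀ (hunit t₁)
      (inner_deriv_sub_eq_zero_of_forall_norm_sub_le (hd t₁) ht₁)
      (hfar.le.trans (min_le_left _ _)) hnear
  · have hsep' := hsep t₁ (t - t₁) hnear.le ht
    rw [add_sub_cancel] at hsep'
    have htri := dist_triangle_right (γ t) (γ t₁) x
    simp only [dist_eq_norm] at hsep' htri
    have : m₀ ≤ ‖γ t - x‖ := by linarith [min_le_right ρ (d / 2)]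
    exact Or.inr (pow_le_pow_left₀ (by positivity) this 2)

end Curve

theorem intervalIntegral_exp_neg_mul_sq_sub_le {b : ℝ} (hb : 0 < b) (c : ℝ) {u v : ℝ}
    (huv : u ≤ v) : ∫ t in u..v, exp (-b * (t - c) ^ 2) ≤ √(π / b) := by
  rw [intervalIntegral.integral_of_le huv, ← integral_gaussian b,
    ← integral_sub_right_eq_self (μ := volume) (fun x => exp (-b * x ^ 2)) c]
  exact setIntegral_le_integral ((integrable_exp_neg_mul_sq hb).comp_sub_right c)
    (Eventually.of_forall fun _ => (exp_pos _).le)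

theorem tendsto_mul_exp_neg_div_div_sqrt (ℓ : ℝ) {c : ℝ} (hc : 0 < c) :
    Tendsto (fun t => ℓ * exp (-c / (4 * t)) / √(4 * π * t)) (𝓝[>] 0) (𝓝 0) := by
  have h := ((tendsto_rpow_mul_exp_neg_mul_atTop_nhds_zero (1 / 2) (c / 4) (by positivity)).comp
    tendsto_inv_nhdsGT_zero).const_mul (ℓ / √(4 * π))
  rw [mul_zero] at h
  refine h.congr' (eventually_mem_nhdsWithin.mono fun t (ht : 0 < t) => ?_)
  dsimp only [comp_apply]
  rw [inv_rpow ht.le, ← sqrt_eq_rpow, sqrt_mul (show (0:ℝ) ≤ 4 * π by positivity) t]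
  field_simp

section Entropy

variable {γ : ℝ → E2} {ℓ : ℝ}

theorem Fcur_eq_div_sqrt (x : E2) {t₀ : ℝ} (ht₀ : 0 ≤ t₀) :
    Fcur γ ℓ x t₀ = (∫ t in (0:ℝ)..ℓ, exp (-‖γ t - x‖ ^ 2 / (4 * t₀))) / √(4 * π * t₀) := by
  rw [Fcur, mul_comm, div_eq_mul_inv _ (√_), sqrt_eq_rpow, ← rpow_neg (by positivity)]
  norm_num

theorem Fcur_le_of_forall_le_norm_sub (hγ : Continuous γ) (hℓ : 0 ≤ ℓ) {x : E2} {t₀ m : ℝ}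
    (ht₀ : 0 < t₀) (hm : 0 ≤ m) (h : ∀ t ∈ Icc 0 ℓ, m ≤ ‖γ t - x‖) :
    Fcur γ ℓ x t₀ ≤ ℓ * exp (-m ^ 2 / (4 * t₀)) / √(4 * π * t₀) := by
  rw [Fcur_eq_div_sqrt x ht₀.le]
  gcongr
  calc ∫ t in (0:ℝ)..ℓ, exp (-‖γ t - x‖ ^ 2 / (4 * t₀))
      ≤ ∫ _ in (0:ℝ)..ℓ, exp (-m ^ 2 / (4 * t₀)) :=
        intervalIntegral.integral_mono_on hℓ (Continuous.intervalIntegrable (by fun_prop) _ _)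
          intervalIntegrable_const fun t ht => by gcongr; exact h t ht
    _ = ℓ * exp (-m ^ 2 / (4 * t₀)) := by simp

theorem Fcur_le_of_forall_mul_sq_le_or (hγ : Continuous γ) (hp : Periodic γ ℓ) (hℓ : 0 ≤ ℓ)
    {x : E2} {t₀ a c t₁ : ℝ} (ht₀ : 0 < t₀) (ha : 0 < a)
    (h : ∀ t, |t - t₁| ≤ ℓ / 2 → a * (t - t₁) ^ 2 ≤ ‖γ t - x‖ ^ 2 ∨ c ≤ ‖γ t - x‖ ^ 2) :
    Fcur γ ℓ x t₀ ≤ (√a)⁻¹ + ℓ * exp (-c / (4 * t₀)) / √(4 * π * t₀) := by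
  set b := a / (4 * t₀)
  set u := t₁ - ℓ / 2 with hu
  have hpt : ∀ t ∈ Icc u (u + ℓ), exp (-‖γ t - x‖ ^ 2 / (4 * t₀)) ≤
      exp (-b * (t - t₁) ^ 2) + exp (-c / (4 * t₀)) := by
    intro t ht
    rcases h t (abs_le.2 ⟨by linarith [ht.1, hu], by linarith [ht.2, hu]⟩) with h | h
    · refine le_add_of_le_of_nonneg ?_ (exp_pos _).le
      rw [show -b * (t - t₁) ^ 2 = -(a * (t - t₁) ^ 2) / (4 * t₀) by ring]
      gcongr
    · exact le_add_of_nonneg_of_le (exp_pos _).le (by gcongr)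
  have hint : ∫ t in (0:ℝ)..ℓ, exp (-‖γ t - x‖ ^ 2 / (4 * t₀)) ≤
      √(π / b) + ℓ * exp (-c / (4 * t₀)) := calc
    _ = ∫ t in u..u + ℓ, exp (-‖γ t - x‖ ^ 2 / (4 * t₀)) := by
        simpa using (hp.comp fun y => exp (-‖y - x‖ ^ 2 / (4 * t₀))).intervalIntegral_add_eq 0 u
    _ ≤ ∫ t in u..u + ℓ, (exp (-b * (t - t₁) ^ 2) + exp (-c / (4 * t₀))) :=
        intervalIntegral.integral_mono_on (by linarith)
          (Continuous.intervalIntegrable (by fun_prop) _ _)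
          (Continuous.intervalIntegrable (by fun_prop) _ _) hpt
    _ = (∫ t in u..u + ℓ, exp (-b * (t - t₁) ^ 2)) + ℓ * exp (-c / (4 * t₀)) := by
        rw [intervalIntegral.integral_add (Continuous.intervalIntegrable (by fun_prop) _ _)
          intervalIntegrable_const]
        simp
    _ ≤ _ := by
        gcongr
        exact intervalIntegral_exp_neg_mul_sq_sub_le (by positivity) t₁ (by linarith)
  have hgauss : √(π / b) / √(4 * π * t₀) = (√a)⁻¹ := by
    rw [show π / b = 4 * π * t₀ / a by simp only [b]; field_simp, sqrt_div (by positivity)]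
    field_simp
  calc Fcur γ ℓ x t₀ ≤ (√(π / b) + ℓ * exp (-c / (4 * t₀))) / √(4 * π * t₀) := by
        rw [Fcur_eq_div_sqrt x ht₀.le]
        gcongr
    _ = _ := by rw [add_div, hgauss]

theorem eventually_nhdsGT_forall_Fcur_lt (hγ : ContDiff ℝ 2 γ) (hunit : ∀ t, ‖deriv γ t‖ = 1)
    (hp : Periodic γ ℓ) (hℓ : 0 < ℓ) (hinj : InjOn γ (Ico 0 ℓ)) {β : ℝ} (hβ : 1 < β) :
    ∀ᶠ t₀ in 𝓝[>] 0, ∀ x, Fcur γ ℓ x t₀ < β := by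
  obtain ⟨a, hlt, ha₀, ha₁⟩ : ∃ a, (√a)⁻¹ < β ∧ 0 < a ∧ a < 1 := by
    have hcont : ContinuousAt (fun a : ℝ => (√a)⁻¹) 1 :=
      continuous_sqrt.continuousAt.inv₀ (by norm_num)
    have := (hcont.eventually (gt_mem_nhds (by simpa using hβ))).filter_mono
      (nhdsWithin_le_nhds (s := Iio 1))
    exact (this.and (Ioo_mem_nhdsLT zero_lt_one)).exists
  obtain ⟨c, hc, hfoot⟩ := exists_quadratic_lower_bound_norm_sub hγ hunit hp hℓ hinj ha₁
  filter_upwards [(tendsto_mul_exp_neg_div_div_sqrt ℓ hc).eventually (gt_mem_nhds (sub_pos.2 hlt)),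
    self_mem_nhdsWithin] with t₀ htail ht₀ x
  obtain ⟨t₁, ht₁⟩ := hfoot x
  have := Fcur_le_of_forall_mul_sq_le_or hγ.continuous hp hℓ.le ht₀ ha₀ ht₁
  linarith

theorem eventually_atTop_forall_Fcur_lt (hγ : Continuous γ) (hℓ : 0 ≤ ℓ) {β : ℝ} (hβ : 0 < β) :
    ∀ᶠ t₀ in atTop, ∀ x, Fcur γ ℓ x t₀ < β := by
  have h : Tendsto (fun t => ℓ / √(4 * π * t)) atTop (𝓝 0) :=
    tendsto_const_nhds.div_atTop
      (tendsto_sqrt_atTop.comp (tendsto_id.const_mul_atTop (by positivity)))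
  filter_upwards [h.eventually (gt_mem_nhds hβ), eventually_gt_atTop 0] with t₀ hlt ht₀ x
  calc Fcur γ ℓ x t₀ ≤ ℓ * exp (-0 ^ 2 / (4 * t₀)) / √(4 * π * t₀) :=
        Fcur_le_of_forall_le_norm_sub hγ hℓ ht₀ le_rfl fun t _ => norm_nonneg _
    _ = ℓ / √(4 * π * t₀) := by simp
    _ < β := hlt

theorem exists_forall_Fcur_lt_of_le_norm (hγ : Continuous γ) (hp : Periodic γ ℓ) (hℓ : 0 < ℓ)
    {δ T β : ℝ} (hδ : 0 < δ) (hT : 0 < T) (hβ : 0 < β) :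
    ∃ R, ∀ x t₀, R ≤ ‖x‖ → t₀ ∈ Icc δ T → Fcur γ ℓ x t₀ < β := by
  obtain ⟨C, -, hC⟩ := hp.exists_pos_norm_le hℓ.ne' hγ
  have h : Tendsto (fun m : ℝ => ℓ * exp (-m ^ 2 / (4 * T)) / √(4 * π * δ)) atTop (𝓝 0) := by
    have : Tendsto (fun m : ℝ => -m ^ 2 / (4 * T)) atTop atBot := by
      simp_rw [neg_div]
      exact tendsto_neg_atTop_atBot.comp
        ((tendsto_pow_atTop two_ne_zero).atTop_div_const (by positivity))
    simpa using ((tendsto_exp_atBot.comp this).const_mul ℓ).div_const (√(4 * π * δ))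
  obtain ⟨M, hM⟩ := eventually_atTop.1 (h.eventually (gt_mem_nhds hβ))
  set m := max M 0
  refine ⟨m + C, fun x t₀ hx ht₀ => ?_⟩
  have hdist : ∀ t ∈ Icc 0 ℓ, m ≤ ‖γ t - x‖ := fun t _ => by
    linarith [hC t, norm_sub_norm_le x (γ t), norm_sub_rev x (γ t)]
  calc Fcur γ ℓ x t₀ ≤ ℓ * exp (-m ^ 2 / (4 * t₀)) / √(4 * π * t₀) :=
        Fcur_le_of_forall_le_norm_sub hγ hℓ.le (hδ.trans_le ht₀.1) (le_max_right _ _) hdist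
    _ ≤ ℓ * exp (-m ^ 2 / (4 * T)) / √(4 * π * δ) := by
        have ht₀pos := hδ.trans_le ht₀.1
        rw [neg_div, neg_div]
        gcongr
        exacts [ht₀.2, ht₀.1]
    _ < β := hM m (le_max_left _ _)

theorem continuousOn_Fcur (hγ : Continuous γ) :
    ContinuousOn (fun p : E2 × ℝ => Fcur γ ℓ p.1 p.2) (univ ×ˢ Ioi 0) := by
  have hint : Continuous fun p : E2 × ℝ => ∫ t in (0:ℝ)..ℓ, exp (-‖γ t - p.1‖ ^ 2 * p.2) :=
    intervalIntegral.continuous_parametric_intervalIntegral_of_continuous' (by fun_prop) 0 ℓ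
  have hpos : ∀ p : E2 × ℝ, p ∈ univ ×ˢ Ioi (0:ℝ) → 0 < p.2 := fun p hp => hp.2
  have hpre : ContinuousOn (fun p : E2 × ℝ => (4 * π * p.2) ^ (-(1:ℝ) / 2)) (univ ×ˢ Ioi 0) :=
    ContinuousOn.rpow_const (by fun_prop) fun p hp =>
      Or.inl (mul_pos (by positivity) (hpos p hp)).ne'
  have hinv : ContinuousOn (fun p : E2 × ℝ => (p.1, (4 * p.2)⁻¹)) (univ ×ˢ Ioi 0) :=
    continuousOn_fst.prodMk ((continuous_const.mul continuous_snd).continuousOn.inv₀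
      fun p hp => (mul_pos four_pos (hpos p hp)).ne')
  refine (hpre.mul (hint.comp_continuousOn hinv)).congr fun p _ => ?_
  simp only [Fcur, div_eq_mul_inv, Pi.mul_apply, comp_apply]

theorem entCur_eq_sSup_image (γ : ℝ → E2) (ℓ : ℝ) :
    entCur γ ℓ = sSup ((fun p : E2 × ℝ => Fcur γ ℓ p.1 p.2) '' (univ ×ˢ Ioi 0)) := by
  rw [entCur]
  congr 1
  ext a
  simp [eq_comm]

end Entropy

theorem exists_eq_sSup_image_of_le_of_notMem {X : Type*} [TopologicalSpace X] {f : X → ℝ}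
    {s K : Set X} (hs : s.Nonempty) (hK : IsCompact K) (hKs : K ⊆ s) (hf : ContinuousOn f K)
    {β : ℝ} (hβ : β < sSup (f '' s)) (hout : ∀ x ∈ s, x ∉ K → f x ≤ β) :
    ∃ x ∈ s, f x = sSup (f '' s) := by
  rcases K.eq_empty_or_nonempty with rfl | hKne
  · have := csSup_le (hs.image f) (forall_mem_image.2 fun x hx => hout x hx (notMem_empty x))
    linarith
  obtain ⟨x₀, hx₀, hmax⟩ := hK.exists_isMaxOn hKne hf
  have hle : ∀ y ∈ f '' s, y ≤ max (f x₀) β := forall_mem_image.2 fun x hx => by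
    by_cases hxK : x ∈ K
    · exact (hmax hxK).trans (le_max_left _ _)
    · exact (hout x hx hxK).trans (le_max_right _ _)
  refine ⟨x₀, hKs hx₀, le_antisymm (le_csSup ⟨_, hle⟩ (mem_image_of_mem f (hKs hx₀))) ?_⟩
  exact (le_max_iff.1 (csSup_le (hs.image f) hle)).resolve_right hβ.not_ge

/-- For a smooth closed embedded unit-speed curve with entropy `λ(γ) > 1`,
the entropy is attained: `λ(γ) = F_{x₀,t₀}(γ)` for some `x₀ ∈ ℝ²`, `t₀ > 0`. -/
theorem stmt15 (γ : ℝ → E2) (hγ : ContDiff ℝ (⊤ : ℕ∞) γ)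
    (hunit : ∀ t, ‖deriv γ t‖ = 1)
    (ℓ : ℝ) (hℓ : 0 < ℓ) (hper : ∀ t, γ (t + ℓ) = γ t)
    (hinj : Set.InjOn γ (Set.Ico 0 ℓ))
    (hent : 1 < entCur γ ℓ) :
    ∃ x₀ : E2, ∃ t₀ : ℝ, 0 < t₀ ∧ Fcur γ ℓ x₀ t₀ = entCur γ ℓ := by
  obtain ⟨β, hβ₁, hβ⟩ := exists_between hent
  have hβ₀ : 0 < β := one_pos.trans hβ₁
  obtain ⟨δ, hδ, hsmall⟩ := mem_nhdsGT_iff_exists_Ioo_subset.1 <|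
    eventually_nhdsGT_forall_Fcur_lt (hγ.of_le (by norm_cast)) hunit hper hℓ hinj hβ₁
  obtain ⟨T, hT⟩ := eventually_atTop.1 <|
    (eventually_atTop_forall_Fcur_lt hγ.continuous hℓ.le hβ₀).and (eventually_gt_atTop 0)
  obtain ⟨R, hR⟩ := exists_forall_Fcur_lt_of_le_norm hγ.continuous hper hℓ hδ (hT T le_rfl).2 hβ₀
  set K := Metric.closedBall (0 : E2) R ×ˢ Icc δ T
  have hKs : K ⊆ univ ×ˢ Ioi 0 := prod_mono (subset_univ _) fun t ht => hδ.trans_le ht.1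
  have hout : ∀ p ∈ univ ×ˢ Ioi (0 : ℝ), p ∉ K → Fcur γ ℓ p.1 p.2 ≤ β := by
    rintro ⟨x, t⟩ ⟨-, ht : 0 < t⟩ hK
    rcases lt_or_ge t δ with hδt | hδt
    · exact (hsmall ⟨ht, hδt⟩ x).le
    rcases lt_or_ge T t with hTt | hTt
    · exact ((hT t hTt.le).1 x).le
    refine (hR x t ?_ ⟨hδt, hTt⟩).le
    by_contra! hx
    exact hK ⟨mem_closedBall_zero_iff.2 hx.le, hδt, hTt⟩
  rw [entCur_eq_sSup_image] at hβ ⊢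
  obtain ⟨⟨x₀, t₀⟩, ⟨-, ht₀⟩, hmax⟩ := exists_eq_sSup_image_of_le_of_notMem
    (by exact ⟨(0, 1), by simp⟩) ((isCompact_closedBall 0 R).prod isCompact_Icc)
    hKs ((continuousOn_Fcur hγ.continuous).mono hKs) hβ hout
  exact ⟨x₀, t₀, ht₀, hmax⟩
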